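/- arXiv:2508.00084 — 2 statements merged into one kernel-verified Lean document; each statement's English description precedes it below -/
import Mathlib

section
/- Over the field ℝ of real numbers, the 4×4 strictly lower triangular matrices S_1 with rows (0,0,0,0), (0,0,0,0), (1,1,0,0), (1,1,0,0) and S_{−1} with rows (0,0,0,0), (0,0,0,0), (1,1,0,0), (−1,1,0,0) give non-isomorphic graded algebras: A(S_1) ≇ A(S_{−1}). -/
open MvPolynomial

noncomputable section

variable (F : Type) [Field F]

/-- The defining relations of the nil graded algebra `A(T)`. -/
def relSet {n : ℕ} (T : Matrix (Fin n) (Fin n) F) : Set (MvPolynomial (Fin n) F) :=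
  { p | ∃ i : Fin n,
      p = X i ^ 2 - ∑ j ∈ Finset.univ.filter (fun j => j < i), C (T i j) * X j * X i }

/-- The nil graded algebra `A(T)` associated to a strictly lower triangular matrix `T`. -/
abbrev NTAlg {n : ℕ} (T : Matrix (Fin n) (Fin n) F) : Type :=
  MvPolynomial (Fin n) F ⧸ Ideal.span (relSet F T)

/-- The generators `X i` of `A(T)`. -/
def NTgen {n : ℕ} (T : Matrix (Fin n) (Fin n) F) (i : Fin n) : NTAlg F T :=
  Ideal.Quotient.mk _ (X i)

/-- An algebra isomorphism is degree preserving iff it (and its inverse) maps the span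
of the degree-2 generators into the span of the degree-2 generators. -/
def IsGradedIso {n : ℕ} {T S : Matrix (Fin n) (Fin n) F}
    (e : NTAlg F T ≃ₐ[F] NTAlg F S) : Prop :=
  (∀ j, e (NTgen F T j) ∈ Submodule.span F (Set.range (NTgen F S))) ∧
  (∀ j, e.symm (NTgen F S j) ∈ Submodule.span F (Set.range (NTgen F T)))

/-- `A(T)` and `A(S)` are isomorphic in the category 𝒩𝒯. -/
def NTIso {n : ℕ} (T S : Matrix (Fin n) (Fin n) F) : Prop :=
  ∃ e : NTAlg F T ≃ₐ[F] NTAlg F S, IsGradedIso F e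

/-- A matrix is strictly lower triangular. -/
def SLTM {n : ℕ} (T : Matrix (Fin n) (Fin n) F) : Prop :=
  ∀ i j : Fin n, i ≤ j → T i j = 0

/-- The key system of equations (Theorem `theo-Key-condition`). -/
def KeyEq {n : ℕ} (T S Γ : Matrix (Fin n) (Fin n) F) : Prop :=
  ∀ r i k : Fin n, i < k →
    2 * Γ i r * Γ k r + Γ k r ^ 2 * S k i =
      ∑ j ∈ Finset.univ.filter (fun j => j < r),
        T r j * (Γ k j * Γ k r * S k i + Γ k j * Γ i r + Γ i j * Γ k r)

/-!
A graded isomorphism `e : A(S₁) ≃ A(S₋₁)` is given on generators by an invertible matrix `Γ`,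
`e Xⱼ = ∑ₖ Γⱼₖ Yₖ`, and it turns the relations `Xᵢ² = (∑ⱼ (S₁)ᵢⱼ Xⱼ) Xᵢ` into quadratic identities
between the rows of `Γ` in `A(S₋₁)`. These are read off through algebra maps
`A(S₋₁) → F[ε₁, ε₂]/(ε₁², ε₂²)`, `Yₖ ↦ xₖ ε₁ + yₖ ε₂`: on a product of two linear forms `v, w` the
`ε₁ε₂`-coefficient is `(v ⬝ x)(w ⬝ y) + (v ⬝ y)(w ⬝ x)`, and five choices of `(x, y)` read off the
`Y₁Y₂, Y₁Y₃, Y₂Y₃, Y₁Y₄, Y₂Y₄` coordinates of elements of degree four.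

Since `X₁² = X₂² = 0`, the images of `X₁, X₂` have no `Y₃, Y₄` components, so the lower right
`2 × 2` block of `Γ` is invertible. With `s = e X₁ + e X₂`, the relations `Xᵢ² = (X₁ + X₂) Xᵢ`
(`i = 3, 4`) force every nonzero `Y₃`-coefficient `γ` of `e X₃, e X₄` to satisfy `γ² = s₁ s₂`, and
every nonzero `Y₄`-coefficient `δ` to satisfy `-δ² = s₁ s₂`. An invertible block contains a nonzero
pair `(γ, δ)` of this kind, which is impossible over `ℝ`, as `-1` is not a square.
-/

open Matrix

section Generators

variable {F} {n : ℕ} {T S : Matrix (Fin n) (Fin n) F}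

def NTlin (T : Matrix (Fin n) (Fin n) F) : (Fin n → F) →ₗ[F] NTAlg F T :=
  Fintype.linearCombination F (NTgen F T)

lemma NTlin_apply (v : Fin n → F) : NTlin T v = ∑ k, v k • NTgen F T k := rfl

lemma NTgen_sq (hT : SLTM F T) (i : Fin n) :
    NTgen F T i ^ 2 = NTlin T (T i) * NTgen F T i := by
  have hrel : X i ^ 2 - ∑ j ∈ {j | j < i}, C (T i j) * X j * X i ∈ Ideal.span (relSet F T) :=
    Ideal.subset_span ⟨i, rfl⟩
  rw [← Ideal.Quotient.eq_zero_iff_mem, map_sub, sub_eq_zero, map_sum] at hrel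
  rw [NTgen, ← map_pow, hrel, NTlin_apply, Finset.sum_mul,
    Finset.sum_filter_of_ne fun j _ h => not_le.mp fun hij => h (by simp [hT i j hij])]
  refine Finset.sum_congr rfl fun j _ => ?_
  rw [map_mul, map_mul, ← algebraMap_eq, Ideal.Quotient.mk_algebraMap, ← Algebra.smul_def]
  rfl

def NTlift {B : Type*} [CommRing B] [Algebra F B] (T : Matrix (Fin n) (Fin n) F) (w : Fin n → B)
    (hw : ∀ i, w i ^ 2 = ∑ j ∈ {j | j < i}, algebraMap F B (T i j) * w j * w i) :
    NTAlg F T →ₐ[F] B :=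
  Ideal.Quotient.liftₐ _ (aeval w) fun a ha => by
    refine Submodule.span_induction ?_ (map_zero _)
      (fun _ _ _ _ h h' => by rw [map_add, h, h', add_zero])
      (fun c _ _ h => by rw [smul_eq_mul, map_mul, h, mul_zero]) ha
    rintro _ ⟨i, rfl⟩
    simp [hw i]

lemma NTlift_NTgen {B : Type*} [CommRing B] [Algebra F B] (w : Fin n → B)
    (hw : ∀ i, w i ^ 2 = ∑ j ∈ {j | j < i}, algebraMap F B (T i j) * w j * w i) (k : Fin n) :
    NTlift T w hw (NTgen F T k) = w k :=
  aeval_X w k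

open TrivSqZeroExt in
lemma NTlin_injective : Function.Injective (NTlin T) := by
  let φ := NTlift (B := TrivSqZeroExt F (Fin n → F)) T (fun k => inr (Pi.single k 1))
    fun i => by simp [pow_two, mul_assoc]
  have hφ (v : Fin n → F) : φ (NTlin T v) = inr v := by
    simp only [φ, NTlin_apply, map_sum, map_smul, NTlift_NTgen, ← inr_smul, ← inr_sum]
    congr 1
    ext j
    simp [Pi.single_apply]
  intro v w h
  simpa [hφ] using congrArg (fun a => (φ a).snd) h

lemma map_NTlin (e : NTAlg F T →ₐ[F] NTAlg F S) {Γ : Matrix (Fin n) (Fin n) F}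
    (hΓ : ∀ j, e (NTgen F T j) = NTlin S (Γ j)) (v : Fin n → F) :
    e (NTlin T v) = NTlin S (v ᵥ* Γ) := by
  rw [vecMul_eq_sum, map_sum, NTlin_apply (T := T), map_sum]
  simp only [map_smul, hΓ]

lemma isUnit_of_map_NTgen (e : NTAlg F T ≃ₐ[F] NTAlg F S) {Γ : Matrix (Fin n) (Fin n) F}
    (hΓ : ∀ j, e (NTgen F T j) = NTlin S (Γ j)) : IsUnit Γ :=
  vecMul_injective_iff_isUnit.mp fun v w h =>
    NTlin_injective <| e.injective <| by
      rw [← e.coe_toAlgHom, map_NTlin e.toAlgHom hΓ, map_NTlin e.toAlgHom hΓ]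
      exact congrArg _ h

lemma sq_eq_of_map_NTgen (hT : SLTM F T) (e : NTAlg F T →ₐ[F] NTAlg F S)
    {Γ : Matrix (Fin n) (Fin n) F} (hΓ : ∀ j, e (NTgen F T j) = NTlin S (Γ j)) (i : Fin n) :
    NTlin S (Γ i) ^ 2 = NTlin S (T i ᵥ* Γ) * NTlin S (Γ i) := by
  rw [← hΓ, ← map_NTlin e hΓ, ← map_pow, ← map_mul, NTgen_sq hT]

end Generators

section PolarPair

open TrivSqZeroExt DualNumber

variable {F} {n : ℕ} {T : Matrix (Fin n) (Fin n) F}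

/-- The pairs `(x, y)` for which `Xₖ ↦ xₖ ε₁ + yₖ ε₂` respects the relations of `A(T)` in
`F[ε₁, ε₂]/(ε₁², ε₂²)`. -/
def IsPolarPair (T : Matrix (Fin n) (Fin n) F) (x y : Fin n → F) : Prop :=
  ∀ i, 2 * (x i * y i) = ∑ j ∈ {j | j < i}, T i j * (x j * y i + y j * x i)

lemma IsPolarPair.polar_eq {x y : Fin n → F} (hxy : IsPolarPair T x y) {v w v' w' : Fin n → F}
    (h : NTlin T v * NTlin T w = NTlin T v' * NTlin T w') :
    v ⬝ᵥ x * w ⬝ᵥ y + v ⬝ᵥ y * w ⬝ᵥ x = v' ⬝ᵥ x * w' ⬝ᵥ y + v' ⬝ᵥ y * w' ⬝ᵥ x := by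
  let ι : F →ₐ[F] DualNumber (DualNumber F) := Algebra.ofId _ _
  let ε₁ : DualNumber (DualNumber F) := inl ε
  let ε₂ : DualNumber (DualNumber F) := ε
  have hε₁ : ε₁ * ε₁ = 0 := by rw [inl_mul_inl, eps_mul_eps, inl_zero]
  have hε₁₂ : ε₁ * ε₂ = inr ε := by
    rw [show ε₂ = inr 1 from rfl, inl_mul_inr, smul_eq_mul, mul_one]
  have coeff (r : F) : (ι r * (ε₁ * ε₂)).snd.snd = r := by
    rw [hε₁₂, Algebra.ofId_apply, algebraMap_eq_inl', inl_mul_inr, snd_inr, smul_eq_mul,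
      algebraMap_eq_inl, show (ε : DualNumber F) = inr 1 from rfl, inl_mul_inr, snd_inr,
      smul_eq_mul, mul_one]
  have mul_eq (a b c d : F) :
      (ι a * ε₁ + ι b * ε₂) * (ι c * ε₁ + ι d * ε₂) = ι (a * d + b * c) * (ε₁ * ε₂) := by
    simp only [map_add, map_mul]
    linear_combination (ι a * ι c) * hε₁ + (ι b * ι d) * (eps_mul_eps : ε₂ * ε₂ = 0)
  let φ := NTlift T (fun k => ι (x k) * ε₁ + ι (y k) * ε₂) fun i => by
    rw [pow_two, mul_eq, mul_comm (y i), ← two_mul, hxy i, map_sum, Finset.sum_mul]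
    refine Finset.sum_congr rfl fun j _ => ?_
    rw [mul_assoc, mul_eq, map_mul, mul_assoc]
    rfl
  have hφ (v : Fin n → F) : φ (NTlin T v) = ι (v ⬝ᵥ x) * ε₁ + ι (v ⬝ᵥ y) * ε₂ := by
    have hsmul (r : F) (z : DualNumber (DualNumber F)) : r • z = ι r * z := Algebra.smul_def r z
    simp only [φ, NTlin_apply, map_sum, map_smul, NTlift_NTgen, hsmul, mul_add, ← mul_assoc,
      ← map_mul, dotProduct, Finset.sum_add_distrib, Finset.sum_mul]
  simpa only [map_mul, hφ, mul_eq, coeff] using congrArg (fun z => (φ z).snd.snd) h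

end PolarPair

section FourByFour

variable {F}

def M₄ (u : F) : Matrix (Fin 4) (Fin 4) F :=
  !![0, 0, 0, 0; 0, 0, 0, 0; 1, 1, 0, 0; u, 1, 0, 0]

variable [NeZero (2 : F)]

lemma NTlin_M₄_sq_eq_mul (u : F) {v s : Fin 4 → F} (hs2 : s 2 = 0) (hs3 : s 3 = 0)
    (h : NTlin (M₄ u) v ^ 2 = NTlin (M₄ u) s * NTlin (M₄ u) v) :
    (v 2 ≠ 0 → v 2 ^ 2 = s 0 * s 1) ∧ (v 3 ≠ 0 → u * v 3 ^ 2 = s 0 * s 1) := by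
  have polar (x y : Fin 4 → F)
      (hxy : IsPolarPair (M₄ u) x y := by
        intro i; fin_cases i <;> simp [M₄, Finset.sum_filter, Fin.sum_univ_four, mul_comm]) :=
    hxy.polar_eq ((pow_two _).symm.trans h)
  have h01 := polar ![1, 0, 0, 0] ![0, 1, 0, 0]
  have h02 := polar ![2, 0, 1, 0] ![0, 0, 1, 0]
  have h12 := polar ![0, 2, 1, 0] ![0, 0, 1, 0]
  have h03 := polar ![2, 0, 0, u] ![0, 0, 0, 1]
  have h13 := polar ![0, 2, 0, 1] ![0, 0, 0, 1]
  simp [dotProduct, Fin.sum_univ_four, hs2, hs3] at h01 h02 h12 h03 h13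
  have h2 : (2 : F) ≠ 0 := two_ne_zero
  refine ⟨fun hv => ?_, fun hv => ?_⟩
  · have e0 : 2 * v 0 + v 2 = s 0 :=
      mul_left_cancel₀ (mul_ne_zero h2 hv) (by linear_combination h02)
    have e1 : 2 * v 1 + v 2 = s 1 :=
      mul_left_cancel₀ (mul_ne_zero h2 hv) (by linear_combination h12)
    linear_combination 2 * h01 - (2 * v 1 - s 1) * e0 + v 2 * e1
  · have e0 : 2 * v 0 + u * v 3 = s 0 :=
      mul_left_cancel₀ (mul_ne_zero h2 hv) (by linear_combination h03)
    have e1 : 2 * v 1 + v 3 = s 1 :=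
      mul_left_cancel₀ (mul_ne_zero h2 hv) (by linear_combination h13)
    linear_combination 2 * h01 - (2 * v 1 - s 1) * e0 + u * v 3 * e1

lemma NTlin_M₄_sq_eq_zero {u : F} (hu : u ≠ 0) {v : Fin 4 → F}
    (h : NTlin (M₄ u) v ^ 2 = 0) : v 2 = 0 ∧ v 3 = 0 := by
  obtain ⟨h2, h3⟩ := NTlin_M₄_sq_eq_mul u (v := v) (s := 0) rfl rfl (by rwa [map_zero, zero_mul])
  simp only [Pi.zero_apply, mul_zero] at h2 h3
  exact ⟨by_contra fun hv => hv (pow_eq_zero_iff two_ne_zero |>.mp (h2 hv)),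
    by_contra fun hv => hv (by simpa [hu] using h3 hv)⟩

end FourByFour

lemma Matrix.det_fin_four_of_upper_right_eq_zero {R : Type*} [CommRing R]
    (A : Matrix (Fin 4) (Fin 4) R) (h02 : A 0 2 = 0) (h03 : A 0 3 = 0) (h12 : A 1 2 = 0)
    (h13 : A 1 3 = 0) :
    A.det = (A 0 0 * A 1 1 - A 0 1 * A 1 0) * (A 2 2 * A 3 3 - A 2 3 * A 3 2) := by
  simp [det_succ_row_zero, Fin.sum_univ_succ, submatrix, Fin.succAbove, h02, h03, h12, h13]
  ring

lemma mul_eq_zero_of_sq_eq_neg_sq {K : Type*} [Field K] [LinearOrder K] [IsStrictOrderedRing K]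
    {x y p : K} (hx : x ≠ 0 → x ^ 2 = p) (hy : y ≠ 0 → -1 * y ^ 2 = p) : x * y = 0 := by
  by_contra hxy
  obtain ⟨hx0, hy0⟩ := mul_ne_zero_iff.mp hxy
  nlinarith [hx hx0, hy hy0, sq_pos_of_ne_zero hx0, sq_pos_of_ne_zero hy0]

/-- Over `ℝ`, the algebras of `S₁` and `S₋₁` are not isomorphic. -/
theorem stmt6 :
    ¬ NTIso ℝ
        !![(0:ℝ),0,0,0; 0,0,0,0; 1,1,0,0; 1,1,0,0]
        !![(0:ℝ),0,0,0; 0,0,0,0; 1,1,0,0; -1,1,0,0] := by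
  change ¬ NTIso ℝ (M₄ 1) (M₄ (-1))
  rintro ⟨e, he, -⟩
  choose Γ hΓ using fun j => (Submodule.mem_span_range_iff_exists_fun ℝ).mp (he j)
  have hΓ' (j : Fin 4) : e (NTgen ℝ _ j) = NTlin _ (Γ j) := (hΓ j).symm
  have hT : SLTM ℝ (M₄ 1) := by
    intro i j hij; fin_cases i <;> fin_cases j <;> simp_all [M₄]
  have hsq := sq_eq_of_map_NTgen hT e.toAlgHom hΓ'
  have hrow (i : Fin 4) : M₄ 1 i ᵥ* Γ = if i < 2 then 0 else Γ 0 + Γ 1 := by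
    ext k; fin_cases i <;> simp [M₄, vecMul, dotProduct, Fin.sum_univ_four]
  obtain ⟨ha2, ha3⟩ := NTlin_M₄_sq_eq_zero (u := -1) (v := Γ 0) (by norm_num)
    (by simpa [hrow] using hsq 0)
  obtain ⟨hb2, hb3⟩ := NTlin_M₄_sq_eq_zero (u := -1) (v := Γ 1) (by norm_num)
    (by simpa [hrow] using hsq 1)
  have hs2 : (Γ 0 + Γ 1) 2 = 0 := by simp [ha2, hb2]
  have hs3 : (Γ 0 + Γ 1) 3 = 0 := by simp [ha3, hb3]
  obtain ⟨hc2, hc3⟩ := NTlin_M₄_sq_eq_mul (-1 : ℝ) (v := Γ 2) hs2 hs3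
    (by simpa [hrow] using hsq 2)
  obtain ⟨hd2, hd3⟩ := NTlin_M₄_sq_eq_mul (-1 : ℝ) (v := Γ 3) hs2 hs3
    (by simpa [hrow] using hsq 3)
  have hdet := (isUnit_iff_isUnit_det Γ).mp (isUnit_of_map_NTgen e hΓ')
  rw [det_fin_four_of_upper_right_eq_zero Γ ha2 ha3 hb2 hb3] at hdet
  refine right_ne_zero_of_mul hdet.ne_zero ?_
  linear_combination mul_eq_zero_of_sq_eq_neg_sq hc2 hd3 - mul_eq_zero_of_sq_eq_neg_sq hd2 hc3
end
end

section
/- Let F be a field of characteristic ≠ 2, n ≥ 5. Let T be the strictly lower triangular n×n matrix with t_{r1} = t_{r2} = 1 for 4 ≤ r ≤ n−1, t_{n1} = t_{n3} = 1, and all other entries 0; let S be the n×n matrix with s_{r1} = s_{r2} = 1 for 4 ≤ r ≤ n and all other entries 0. Then the graded algebras A(T) and A(S) are not isomorphic. -/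
open MvPolynomial

noncomputable section

variable (F : Type) [Field F]

/-!
A graded isomorphism `e : A(T) ≅ A(S)` is given on generators by an invertible matrix `Γ` with
inverse `Δ`. Mapping the relations of `A(T)` through `e` and then through homomorphisms
`A(S) → F[ε₁, ε₂] / (ε₁², ε₂²)`, which detect the coefficients of the products `Y i * Y k`, shows
that `Γ` satisfies the key equations `KeyEq T S Γ`, and likewise `KeyEq S T Δ`. In both matrices the first three generators square to zero and every later one
satisfies `X k ^ 2 = X a * X k + X b * X k` with `a, b < 3`. The key equations then force `Γ`
to map `X 0, X 1, X 2` to multiples of distinct `Y 0, Y 1, Y 2`, and a row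
`X k ^ 2 = X a * X k + X b * X k` of `T` forces the images of `X a` and `X b` to avoid `Y 2`,
which no row of `S` involves. Since `T` has rows supported on `{0, 1}` and on `{0, 2}`, none of
the images of `X 0, X 1, X 2` involves `Y 2`, contradicting invertibility.
-/

section QuadraticModel

open Finset Matrix DualNumber TrivSqZeroExt

variable {F}

namespace NTAlg

variable {n : ℕ}

theorem NTgen_sq (M : Matrix (Fin n) (Fin n) F) (k : Fin n) :
    NTgen F M k ^ 2 = ∑ j ∈ univ.filter (· < k),
      algebraMap F (NTAlg F M) (M k j) * NTgen F M j * NTgen F M k := by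
  have hk : X k ^ 2 - ∑ j ∈ univ.filter (· < k), C (M k j) * X j * X k ∈
      Ideal.span (relSet F M) := Ideal.subset_span ⟨k, rfl⟩
  have h := Ideal.Quotient.eq_zero_iff_mem.mpr hk
  rw [← Ideal.Quotient.mkₐ_eq_mk F] at h
  simp only [map_sub, map_pow, map_sum, map_mul, ← algebraMap_eq, AlgHom.commutes,
    sub_eq_zero] at h
  exact h

def lift {B : Type*} [CommRing B] [Algebra F B] (M : Matrix (Fin n) (Fin n) F) (g : Fin n → B)
    (hg : ∀ k, g k ^ 2 = ∑ j ∈ univ.filter (· < k), algebraMap F B (M k j) * g j * g k) :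
    NTAlg F M →ₐ[F] B :=
  Ideal.Quotient.liftₐ _ (aeval g) fun _ hp =>
    (Ideal.span_le (I := RingHom.ker (aeval g))).2
      (by rintro _ ⟨k, rfl⟩; simp [hg k]) hp

@[simp]
theorem lift_NTgen {B : Type*} [CommRing B] [Algebra F B] (M : Matrix (Fin n) (Fin n) F)
    (g : Fin n → B) (hg) (k : Fin n) : lift M g hg (NTgen F M k) = g k :=
  aeval_X g k

end NTAlg

/-- `p ε₁ + q ε₂` in `F[ε₁, ε₂] / (ε₁², ε₂²)`. -/
def dualPair (p q : F) : DualNumber (DualNumber F) := p • inl ε + q • inr 1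

theorem dualPair_mul_dualPair (p q p' q' : F) :
    dualPair p q * dualPair p' q' = (p * q' + q * p') • (inr ε : DualNumber (DualNumber F)) := by
  ext <;> simp [dualPair, add_mul, mul_comm]

theorem sum_smul_dualPair {ι : Type*} (s : Finset ι) (c a b : ι → F) :
    ∑ i ∈ s, c i • dualPair (a i) (b i) =
      dualPair (∑ i ∈ s, c i * a i) (∑ i ∈ s, c i * b i) := by
  simp [dualPair, sum_add_distrib, sum_smul, smul_smul]

theorem snd_fst_dualPair (p q : F) : (dualPair p q).fst.snd = p := by
  simp [dualPair]

variable {n : ℕ}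

/-- `X j ↦ a j • ε₁ + b j • ε₂` respects the relations of `A(M)`. -/
def IsAdmissible (M : Matrix (Fin n) (Fin n) F) (a b : Fin n → F) : Prop :=
  ∀ k, 2 * a k * b k = ∑ j ∈ univ.filter (· < k), M k j * (a j * b k + b j * a k)

theorem dualPair_sq_iff (M : Matrix (Fin n) (Fin n) F) (a b : Fin n → F) (k : Fin n) :
    dualPair (a k) (b k) ^ 2 = ∑ j ∈ univ.filter (· < k),
        algebraMap F _ (M k j) * dualPair (a j) (b j) * dualPair (a k) (b k) ↔
      2 * a k * b k = ∑ j ∈ univ.filter (· < k), M k j * (a j * b k + b j * a k) := by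
  have hε : ∀ x y : F, x • (inr ε : DualNumber (DualNumber F)) = y • inr ε ↔ x = y :=
    fun x y => ⟨fun h => by simpa using congrArg (fun z => z.snd.snd) h, fun h => h ▸ rfl⟩
  simp only [sq, ← Algebra.smul_def, smul_mul_assoc, dualPair_mul_dualPair, smul_smul,
    ← sum_smul, hε]
  rw [show a k * b k + b k * a k = 2 * a k * b k by ring]

def dualLift {M : Matrix (Fin n) (Fin n) F} {a b : Fin n → F} (hab : IsAdmissible M a b) :
    NTAlg F M →ₐ[F] DualNumber (DualNumber F) :=
  NTAlg.lift M (fun k => dualPair (a k) (b k)) fun k => (dualPair_sq_iff M a b k).2 (hab k)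

theorem dualLift_NTgen {M : Matrix (Fin n) (Fin n) F} {a b : Fin n → F}
    (hab : IsAdmissible M a b) (k : Fin n) :
    dualLift hab (NTgen F M k) = dualPair (a k) (b k) :=
  NTAlg.lift_NTgen ..

theorem linearIndependent_NTgen (M : Matrix (Fin n) (Fin n) F) :
    LinearIndependent F (NTgen F M) := by
  rw [Fintype.linearIndependent_iffₛ]
  intro c d hcd l
  have hl : IsAdmissible M (Pi.single l 1) 0 := fun k => by simp
  simpa [dualLift_NTgen, sum_smul_dualPair, snd_fst_dualPair, Pi.single_apply] using
    congrArg (fun x => (dualLift hl x).fst.snd) hcd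

theorem exists_matrix_of_mem_span {A ι : Type*} [AddCommMonoid A] [Module F A] [Fintype ι]
    {x : Fin n → A} {v : ι → A} (h : ∀ k, x k ∈ Submodule.span F (Set.range v)) :
    ∃ Γ : Matrix ι (Fin n) F, ∀ k, x k = ∑ i, Γ i k • v i := by
  choose c hc using fun k => (Submodule.mem_span_range_iff_exists_fun F).1 (h k)
  exact ⟨Matrix.of fun i k => c k i, fun k => (hc k).symm⟩

variable {T S Γ Δ : Matrix (Fin n) (Fin n) F}

theorem isAdmissible_vecMul (f : NTAlg F T →ₐ[F] NTAlg F S)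
    (hf : ∀ k, f (NTgen F T k) = ∑ i, Γ i k • NTgen F S i) {a b : Fin n → F}
    (hab : IsAdmissible S a b) : IsAdmissible T (a ᵥ* Γ) (b ᵥ* Γ) := by
  have himage : ∀ k, dualLift hab (f (NTgen F T k)) = dualPair ((a ᵥ* Γ) k) ((b ᵥ* Γ) k) := by
    intro k
    simp only [hf, map_sum, map_smul, dualLift_NTgen, sum_smul_dualPair, Matrix.vecMul,
      dotProduct, mul_comm]
  intro r
  rw [← dualPair_sq_iff, ← himage]
  simpa only [map_pow, map_sum, map_mul, AlgHom.commutes, himage] using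
    congrArg (fun x => dualLift hab (f x)) (NTAlg.NTgen_sq T r)

theorem mul_eq_one_of_apply_NTgen (e : NTAlg F T ≃ₐ[F] NTAlg F S)
    (hΓ : ∀ k, e (NTgen F T k) = ∑ i, Γ i k • NTgen F S i)
    (hΔ : ∀ k, e.symm (NTgen F S k) = ∑ i, Δ i k • NTgen F T i) : Δ * Γ = 1 := by
  ext j k
  refine Fintype.linearIndependent_iffₛ.1 (linearIndependent_NTgen T)
    (fun j => (Δ * Γ) j k) (fun j => (1 : Matrix _ _ F) j k) ?_ j
  calc ∑ j, (Δ * Γ) j k • NTgen F T j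
      = ∑ i, Γ i k • ∑ j, Δ j i • NTgen F T j := by
        simp only [Matrix.mul_apply, sum_smul, smul_sum, smul_smul, mul_comm]
        exact sum_comm
    _ = e.symm (e (NTgen F T k)) := by simp [hΓ, hΔ]
    _ = ∑ j, (1 : Matrix _ _ F) j k • NTgen F T j := by simp [Matrix.one_apply]

/-- The homomorphism `X i ↦ ε₁`, `X k ↦ ε₂ + (S k i / 2) ε₁` reads off the coefficient of
`X i * X k` in the quadratic part of `A(S)`. -/
theorem isAdmissible_single (h2 : (2 : F) ≠ 0) {i k : Fin n} (hik : i < k) :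
    IsAdmissible S (Pi.single i 1 + Pi.single k (S k i / 2)) (Pi.single k 1) := by
  intro j
  rcases eq_or_ne j k with rfl | hjk
  · rw [sum_eq_single i]
    · simp [hik.ne, hik.ne', mul_div_cancel₀ _ h2]
    · intro l hl hli
      have : l ≠ j := (mem_filter.1 hl).2.ne
      simp [hli, this]
    · simp [hik]
  · rw [sum_eq_zero]
    · simp [hjk]
    · intro l hl
      have : ¬ (l = k ∧ j = i) := by
        rintro ⟨rfl, rfl⟩; exact absurd (hik.trans (mem_filter.1 hl).2) (lt_irrefl _)
      simp only [Pi.add_apply, Pi.single_apply, hjk]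
      grind

theorem keyEq_of_isAdmissible (h2 : (2 : F) ≠ 0)
    (hΓ : ∀ a b, IsAdmissible S a b → IsAdmissible T (a ᵥ* Γ) (b ᵥ* Γ)) : KeyEq F T S Γ := by
  intro r i k hik
  have hc : 2 * (S k i / 2) = S k i := mul_div_cancel₀ _ h2
  have h := hΓ _ _ (isAdmissible_single h2 hik) r
  simp only [Matrix.add_vecMul, Matrix.single_vecMul, Pi.add_apply, Pi.smul_apply,
    Matrix.row_apply, smul_eq_mul, one_mul] at h
  calc 2 * Γ i r * Γ k r + Γ k r ^ 2 * S k i = 2 * (Γ i r + S k i / 2 * Γ k r) * Γ k r := by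
        linear_combination -(Γ k r ^ 2) * hc
    _ = _ := h
    _ = _ := sum_congr rfl fun j _ => by linear_combination T r j * Γ k j * Γ k r * hc

theorem IsGradedIso.exists_keyEq (h2 : (2 : F) ≠ 0) {e : NTAlg F T ≃ₐ[F] NTAlg F S}
    (he : IsGradedIso F e) : ∃ Γ Δ : Matrix (Fin n) (Fin n) F,
      Δ * Γ = 1 ∧ KeyEq F T S Γ ∧ KeyEq F S T Δ := by
  obtain ⟨Γ, hΓ⟩ := exists_matrix_of_mem_span he.1
  obtain ⟨Δ, hΔ⟩ := exists_matrix_of_mem_span he.2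
  exact ⟨Γ, Δ, mul_eq_one_of_apply_NTgen e hΓ hΔ,
    keyEq_of_isAdmissible h2 fun _ _ => isAdmissible_vecMul e.toAlgHom hΓ,
    keyEq_of_isAdmissible h2 fun _ _ => isAdmissible_vecMul e.symm.toAlgHom hΔ⟩

end QuadraticModel

section Combinatorics

open Finset Matrix

variable {F} {n : ℕ} {M T S Γ Δ : Matrix (Fin n) (Fin n) F} {w : Fin n → F}

/-- The coefficients of `(∑ i, w i • X i) ^ 2` on the monomials `X i * X k`, `i < k`, of `A(M)`
vanish. -/
def IsSqZero (M : Matrix (Fin n) (Fin n) F) (w : Fin n → F) : Prop :=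
  ∀ i k, i < k → 2 * w i * w k + w k ^ 2 * M k i = 0

def PairRows (M : Matrix (Fin n) (Fin n) F) : Prop :=
  (∀ k : Fin n, (k : ℕ) < 3 → ∀ j, M k j = 0) ∧
  ∀ k : Fin n, 3 ≤ (k : ℕ) →
    ∃ c₁ c₂ : Fin n, c₁ < c₂ ∧ (c₂ : ℕ) < 3 ∧ M k c₁ = 1 ∧ M k c₂ = 1

theorem KeyEq.isSqZero (hΓ : KeyEq F T S Γ) {r : Fin n} (hr : ∀ j, T r j = 0) :
    IsSqZero S fun i => Γ i r :=
  fun i k hik => by simpa [hr] using hΓ r i k hik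

theorem IsSqZero.eq_zero (hw : IsSqZero M w) {c₁ c₂ k : Fin n} (h12 : c₁ < c₂) (h2k : c₂ < k)
    (h₁ : M k c₁ = 1) (h₂ : M k c₂ = 1) (h₀ : M c₂ c₁ = 0) : w k = 0 := by
  have e₁ := hw c₁ k (h12.trans h2k)
  have e₂ := hw c₂ k h2k
  have e₀ := hw c₁ c₂ h12
  rw [h₁] at e₁
  rw [h₂] at e₂
  rw [h₀] at e₀
  refine pow_eq_zero_iff (n := 4) (by norm_num) |>.1 ?_
  linear_combination w k ^ 2 * e₁ - 2 * w c₁ * w k * e₂ + 2 * w k ^ 2 * e₀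

theorem IsSqZero.eq_zero_of_three_le (hM : PairRows M) (hw : IsSqZero M w) {k : Fin n}
    (hk : 3 ≤ (k : ℕ)) : w k = 0 := by
  obtain ⟨c₁, c₂, h12, hc₂, h₁, h₂⟩ := hM.2 k hk
  exact hw.eq_zero h12 (Fin.lt_def.2 (by omega)) h₁ h₂ (hM.1 c₂ hc₂ c₁)

theorem KeyEq.apply_eq_zero_of_lt_three (hT : PairRows T) (hS : PairRows S)
    (hΓ : KeyEq F T S Γ) {i j : Fin n} (hj : (j : ℕ) < 3) (hi : 3 ≤ (i : ℕ)) : Γ i j = 0 :=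
  (hΓ.isSqZero (hT.1 j hj)).eq_zero_of_three_le hS hi

theorem IsSqZero.mul_eq_zero_of_ne (h2 : (2 : F) ≠ 0) (hM : PairRows M) (hw : IsSqZero M w)
    {i k : Fin n} (hik : i ≠ k) : w i * w k = 0 := by
  wlog h : i < k generalizing i k
  · rw [mul_comm]
    exact this hik.symm (lt_of_le_of_ne (not_lt.1 h) hik.symm)
  by_cases hk : 3 ≤ (k : ℕ)
  · rw [hw.eq_zero_of_three_le hM hk, mul_zero]
  · have h := hw i k h
    rw [hM.1 k (by omega) i, mul_zero, add_zero, mul_assoc] at h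
    exact (mul_eq_zero.1 h).resolve_left h2

theorem exists_ne_zero_of_mul_eq_one (hΔΓ : Δ * Γ = 1)
    (hΔ : ∀ i k : Fin n, (i : ℕ) < 3 → 3 ≤ (k : ℕ) → Δ k i = 0) {k : Fin n}
    (hk : 3 ≤ (k : ℕ)) : ∃ m : Fin n, 3 ≤ (m : ℕ) ∧ Γ m k ≠ 0 := by
  by_contra! h
  have hkk := congr_fun (congr_fun hΔΓ k) k
  rw [mul_apply, one_apply_eq, sum_eq_zero] at hkk
  · exact zero_ne_one hkk
  intro i _
  by_cases hi : (i : ℕ) < 3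
  · rw [hΔ i k hi hk, zero_mul]
  · rw [h i (by omega), mul_zero]

theorem mul_eq_zero_of_mul_eq_one (hΔΓ : Δ * Γ = 1) {a b : Fin n} (hab : a ≠ b)
    (ha : ∀ i i', i ≠ i' → Γ i a * Γ i' a = 0) (hb : ∀ i i', i ≠ i' → Γ i b * Γ i' b = 0)
    (i : Fin n) : Γ i a * Γ i b = 0 := by
  by_contra h
  obtain ⟨hia, hib⟩ := mul_ne_zero_iff.1 h
  have hsingle : ∀ c, (∀ i i', i ≠ i' → Γ i c * Γ i' c = 0) → Γ i c ≠ 0 →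
      (Δ * Γ) a c = Δ a i * Γ i c := fun c hc hic => by
    rw [mul_apply, sum_eq_single i (fun l _ hl => ?_) (by simp)]
    rw [(mul_eq_zero.1 (hc l i hl)).resolve_right hic, mul_zero]
  have hab' := hsingle b hb hib
  have haa := hsingle a ha hia
  rw [hΔΓ, one_apply_ne hab] at hab'
  rw [hΔΓ, one_apply_eq, (mul_eq_zero.1 hab'.symm).resolve_right hib, zero_mul] at haa
  exact one_ne_zero haa

/-- With `u = Γ · a + Γ · b`, the key equations for `X r ^ 2 = X a * X r + X b * X r` at the
pairs `(i, m)` give `u i = 2 Γ i r + Γ m r * S m i`, and at `(i₀, i₁)`, `(i₀, i₂)` they give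
`u i₀ * u i₁ = (Γ m r) ^ 2 ≠ 0` and `u i₀ * Γ i₂ r = 0`. -/
theorem KeyEq.add_eq_zero (hΓ : KeyEq F T S Γ) {r a b m i₀ i₁ i₂ : Fin n}
    (hr : T r = Pi.single a 1 + Pi.single b 1) (ha : a < r) (hb : b < r)
    (hm : Γ m r ≠ 0) (hma : Γ m a = 0) (hmb : Γ m b = 0)
    (h01 : i₀ < i₁) (h02 : i₀ < i₂) (h1m : i₁ < m) (h2m : i₂ < m)
    (hS₀ : S m i₀ = 1) (hS₁ : S m i₁ = 1) (hS₂ : S m i₂ = 0)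
    (hS₁₀ : S i₁ i₀ = 0) (hS₂₀ : S i₂ i₀ = 0) :
    Γ i₂ a + Γ i₂ b = 0 := by
  have E : ∀ i k, i < k → 2 * Γ i r * Γ k r + Γ k r ^ 2 * S k i =
      (Γ k a * Γ k r * S k i + Γ k a * Γ i r + Γ i a * Γ k r) +
        (Γ k b * Γ k r * S k i + Γ k b * Γ i r + Γ i b * Γ k r) := by
    intro i k hik
    rw [hΓ r i k hik, hr]
    simp [add_mul, sum_add_distrib, Pi.single_apply, ite_mul, ha, hb]
  have hm₀ := E i₀ m (h01.trans h1m)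
  have hm₁ := E i₁ m h1m
  have hm₂ := E i₂ m h2m
  have h₀₁ := E i₀ i₁ h01
  have h₀₂ := E i₀ i₂ h02
  rw [hma, hmb] at hm₀ hm₁ hm₂
  rw [hS₀] at hm₀
  rw [hS₁] at hm₁
  rw [hS₂] at hm₂
  rw [hS₁₀] at h₀₁
  rw [hS₂₀] at h₀₂
  have hu₀ : Γ i₀ a + Γ i₀ b = 2 * Γ i₀ r + Γ m r :=
    mul_right_cancel₀ hm (by linear_combination -hm₀)
  have hu₁ : Γ i₁ a + Γ i₁ b = 2 * Γ i₁ r + Γ m r :=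
    mul_right_cancel₀ hm (by linear_combination -hm₁)
  have hu₂ : Γ i₂ a + Γ i₂ b = 2 * Γ i₂ r :=
    mul_right_cancel₀ hm (by linear_combination -hm₂)
  have hu₀ne : Γ i₀ a + Γ i₀ b ≠ 0 := by
    intro h0
    refine hm (pow_eq_zero_iff two_ne_zero |>.1 ?_)
    linear_combination (Γ i₁ a + Γ i₁ b) * h0 + 2 * h₀₁ -
      (Γ i₁ a + Γ i₁ b - 2 * Γ i₁ r) * hu₀ - Γ m r * hu₁
  have hw₂ : (Γ i₀ a + Γ i₀ b) * Γ i₂ r = 0 := by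
    linear_combination -(Γ i₀ r * hu₂ + h₀₂)
  rw [hu₂, (mul_eq_zero.1 hw₂).resolve_left hu₀ne, mul_zero]

end Combinatorics

section Counterexample

open Finset Matrix

variable {F} {n : ℕ} {T Γ Δ : Matrix (Fin n) (Fin n) F}

/-- Indices are `0`-based: rows `3, …, n - 2` and `n - 1` are the rows `4, …, n - 1` and `n` of
the informal statement. -/
def Tmat (n : ℕ) : Matrix (Fin n) (Fin n) F :=
  Matrix.of fun i j : Fin n =>
    if (3 ≤ (i : ℕ) ∧ (i : ℕ) ≤ n - 2 ∧ ((j : ℕ) = 0 ∨ (j : ℕ) = 1)) ∨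
       ((i : ℕ) = n - 1 ∧ ((j : ℕ) = 0 ∨ (j : ℕ) = 2)) then (1 : F) else 0

def Smat (n : ℕ) : Matrix (Fin n) (Fin n) F :=
  Matrix.of fun i j : Fin n =>
    if 3 ≤ (i : ℕ) ∧ ((j : ℕ) = 0 ∨ (j : ℕ) = 1) then (1 : F) else 0

theorem pairRows_Tmat (hn : 4 ≤ n) : PairRows (Tmat (F := F) n) := by
  refine ⟨fun k hk j => if_neg (by omega), fun k hk => ?_⟩
  by_cases hkn : (k : ℕ) ≤ n - 2
  · exact ⟨⟨0, by omega⟩, ⟨1, by omega⟩, Fin.mk_lt_mk.2 (by omega), by simp,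
      if_pos (Or.inl ⟨hk, hkn, Or.inl rfl⟩), if_pos (Or.inl ⟨hk, hkn, Or.inr rfl⟩)⟩
  · exact ⟨⟨0, by omega⟩, ⟨2, by omega⟩, Fin.mk_lt_mk.2 (by omega), by simp,
      if_pos (Or.inr ⟨by omega, Or.inl rfl⟩), if_pos (Or.inr ⟨by omega, Or.inr rfl⟩)⟩

theorem pairRows_Smat : PairRows (Smat (F := F) n) :=
  ⟨fun k hk j => if_neg (by omega), fun k hk => ⟨⟨0, by omega⟩, ⟨1, by omega⟩,
    Fin.mk_lt_mk.2 (by omega), by simp, if_pos (by simp [hk]), if_pos (by simp [hk])⟩⟩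

theorem apply_two_eq_zero_of_row_eq (h2 : (2 : F) ≠ 0) (hT : PairRows T) (hΔΓ : Δ * Γ = 1)
    (hΓ : KeyEq F T (Smat n) Γ) (hΔ : KeyEq F (Smat n) T Δ) {r a b x : Fin n}
    (hr : 3 ≤ (r : ℕ)) (hTr : T r = Pi.single a 1 + Pi.single b 1) (hab : a ≠ b)
    (ha : (a : ℕ) < 3) (hb : (b : ℕ) < 3) (hx : (x : ℕ) = 2) : Γ x a = 0 ∧ Γ x b = 0 := by
  have hS := pairRows_Smat (F := F) (n := n)
  obtain ⟨m, hm3, hm⟩ := exists_ne_zero_of_mul_eq_one hΔΓ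
    (fun i k hi hk => hΔ.apply_eq_zero_of_lt_three hS hT hi hk) hr
  have hSm : ∀ j : Fin n, Smat n m j = if (j : ℕ) = 0 ∨ (j : ℕ) = 1 then (1 : F) else 0 :=
    fun j => by simp [Smat, hm3]
  have hsum := hΓ.add_eq_zero hTr (Fin.lt_def.2 (by omega)) (Fin.lt_def.2 (by omega)) hm
    (hΓ.apply_eq_zero_of_lt_three hT hS ha hm3) (hΓ.apply_eq_zero_of_lt_three hT hS hb hm3)
    (i₀ := ⟨0, by omega⟩) (i₁ := ⟨1, by omega⟩) (i₂ := x)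
    (Fin.lt_def.2 zero_lt_one) (Fin.lt_def.2 (show 0 < (x : ℕ) by omega))
    (Fin.lt_def.2 (show 1 < (m : ℕ) by omega)) (Fin.lt_def.2 (by omega)) (by simp [hSm]) (by simp [hSm]) (by simp [hSm, hx])
    (hS.1 _ (by simp) _) (hS.1 x (by omega) _)
  have hprod := mul_eq_zero_of_mul_eq_one hΔΓ hab
    (fun i i' h => (hΓ.isSqZero (hT.1 a ha)).mul_eq_zero_of_ne h2 hS h)
    (fun i i' h => (hΓ.isSqZero (hT.1 b hb)).mul_eq_zero_of_ne h2 hS h) x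
  have ha0 : Γ x a = 0 :=
    pow_eq_zero_iff two_ne_zero |>.1 (by linear_combination Γ x a * hsum - hprod)
  exact ⟨ha0, by linear_combination hsum - ha0⟩

theorem not_keyEq_Tmat_Smat (h2 : (2 : F) ≠ 0) (hn : 5 ≤ n) (hΔΓ : Δ * Γ = 1)
    (hΓ : KeyEq F (Tmat n) (Smat n) Γ) (hΔ : KeyEq F (Smat n) (Tmat n) Δ) : False := by
  obtain ⟨x₀, hx₀⟩ : ∃ x : Fin n, (x : ℕ) = 0 := ⟨⟨0, by omega⟩, rfl⟩
  obtain ⟨x₁, hx₁⟩ : ∃ x : Fin n, (x : ℕ) = 1 := ⟨⟨1, by omega⟩, rfl⟩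
  obtain ⟨x₂, hx₂⟩ : ∃ x : Fin n, (x : ℕ) = 2 := ⟨⟨2, by omega⟩, rfl⟩
  obtain ⟨x₃, hx₃⟩ : ∃ x : Fin n, (x : ℕ) = 3 := ⟨⟨3, by omega⟩, rfl⟩
  obtain ⟨xₙ, hxₙ⟩ : ∃ x : Fin n, (x : ℕ) = n - 1 := ⟨⟨n - 1, by omega⟩, rfl⟩
  have hT := pairRows_Tmat (F := F) (by omega : 4 ≤ n)
  have hrow₃ : Tmat (F := F) n x₃ = Pi.single x₀ 1 + Pi.single x₁ 1 := by
    funext j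
    simp only [Tmat, of_apply, Pi.add_apply, Pi.single_apply, Fin.ext_iff, hx₀, hx₁, hx₃]
    split_ifs <;> first | omega | norm_num
  have hrowₙ : Tmat (F := F) n xₙ = Pi.single x₀ 1 + Pi.single x₂ 1 := by
    funext j
    simp only [Tmat, of_apply, Pi.add_apply, Pi.single_apply, Fin.ext_iff, hx₀, hx₂, hxₙ,
      true_and]
    split_ifs <;> first | omega | norm_num
  obtain ⟨h₀, h₁⟩ := apply_two_eq_zero_of_row_eq h2 hT hΔΓ hΓ hΔ (by omega) hrow₃
    (by rw [Ne, Fin.ext_iff]; omega) (by omega) (by omega) hx₂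
  obtain ⟨-, h₂⟩ := apply_two_eq_zero_of_row_eq h2 hT hΔΓ hΓ hΔ (by omega) hrowₙ
    (by rw [Ne, Fin.ext_iff]; omega) (by omega) (by omega) hx₂
  have h22 : (Γ * Δ) x₂ x₂ = (1 : Matrix (Fin n) (Fin n) F) x₂ x₂ := by
    rw [mul_eq_one_comm.1 hΔΓ]
  rw [mul_apply, one_apply_eq, sum_eq_zero] at h22
  · exact zero_ne_one h22
  intro j _
  by_cases hj : (j : ℕ) < 3
  · obtain rfl | rfl | rfl : j = x₀ ∨ j = x₁ ∨ j = x₂ := by simp only [Fin.ext_iff]; omega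
    all_goals simp [*]
  · rw [hΔ.apply_eq_zero_of_lt_three pairRows_Smat hT (by omega : (x₂ : ℕ) < 3)
      (by omega : 3 ≤ (j : ℕ)), mul_zero]

end Counterexample

/-- For `n ≥ 5`, the matrix `T` (rows `4..n-1` equal to `(1,1,0,…)`, row `n`
equal to `(1,0,1,0,…)`, 1-based) and the matrix `S` (rows `4..n` equal to
`(1,1,0,…)`) give non-isomorphic graded algebras. -/
theorem stmt17 (h2 : (2 : F) ≠ 0) {n : ℕ} (hn : 5 ≤ n) :
    ¬ NTIso F
        (Matrix.of fun i j : Fin n =>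
          if (3 ≤ (i : ℕ) ∧ (i : ℕ) ≤ n - 2 ∧ ((j : ℕ) = 0 ∨ (j : ℕ) = 1)) ∨
             ((i : ℕ) = n - 1 ∧ ((j : ℕ) = 0 ∨ (j : ℕ) = 2)) then (1 : F) else 0)
        (Matrix.of fun i j : Fin n =>
          if 3 ≤ (i : ℕ) ∧ ((j : ℕ) = 0 ∨ (j : ℕ) = 1) then (1 : F) else 0) := by
  rintro ⟨e, he⟩
  obtain ⟨Γ, Δ, hΔΓ, hΓ, hΔ⟩ := IsGradedIso.exists_keyEq h2 he
  exact not_keyEq_Tmat_Smat h2 hn hΔΓ hΓ hΔ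
end
end
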